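/- (Multi-task market is robust to replication.) Let N be a finite set of M ≥ 1 parties, i ∈ N, i' ∉ N, N^R = N ∪ {i'}, and D ⊆ N. For each k ∈ N^R let g_k : Finset N^R → ℝ be nonnegative, monotone, and supermodular, with g_{i'} = g_i, and suppose every g_j satisfies the replica property with respect to {i, i'}: g_j(S ∪ {i}) = g_j(S ∪ {i'}) = g_j(S ∪ {i, i'}) for every S ⊆ N^R. Define w(S) = Σ_{j∈D} g_j(S) + Σ_{k∈S}(g_k(S) − g_k({k})), a_j = g_j(N) − g_j({j}) for j ∈ N, and A = Σ_{j∈N} a_j, and assume w(N) > 0. Let φ(i) be the normalized Shapley value of i computed from w on the market N, and φ^R(i) its normalized Shapley value computed from w on the market N^R. Then 2 · φ^R(i) · (A + a_i) ≤ φ(i) · A + a_i; i.e., party i's total payoff t^R = 2(φ^R(i)(A + a_i) − a_i) after replicating itself once does not exceed its payoff t = φ(i)A − a_i in the original market. -/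

import Mathlib

/-!
The replica property, monotonicity and supermodularity force every gain function to ignore
`i` and `i'`: for `S ∌ i, i'`, supermodularity bounds `g(S ∪ {i'}) − g(S)` by
`g(S ∪ {i, i'}) − g(S ∪ {i}) = 0`. So the marginal contribution of `i` (or of `i'`) to `w` at
`S` is `g_i(S) − g_i(∅)` whether or not the replica is present, and the unnormalized Shapley
value `T` of `i` is the same in both markets, while `w(N^R) = w(N) + a_i`. Since
`0 ≤ T ≤ a_i ≤ A ≤ w(N)`, what remains is the elementary inequality
`2 T (A + a_i) / (w(N) + a_i) ≤ T A / w(N) + a_i`.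
-/

open Finset

/-- The multi-task characteristic function
`w(S) = Σ_{j∈D} g_j(S) + Σ_{k∈S} (g_k(S) − g_k({k}))`, where `D` indexes the
distinct validation tasks. -/
noncomputable def multiTaskValue {ι : Type*} [DecidableEq ι] (D : Finset ι)
    (g : ι → Finset ι → ℝ) (S : Finset ι) : ℝ :=
  ∑ j ∈ D, g j S + ∑ k ∈ S, (g k S - g k {k})

/-- The normalized Shapley value of party `i` for the characteristic function `v`
in the market `market` with `m = |market|` parties:
`φ(v,i) = (1/v(market)) · Σ_{S ⊆ market \ {i}} (|S|!(m−|S|−1)!/m!) · (v(S∪{i}) − v(S))`. -/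
noncomputable def shapley {ι : Type*} [DecidableEq ι] (market : Finset ι)
    (v : Finset ι → ℝ) (i : ι) : ℝ :=
  (1 / v market) * ∑ S ∈ (market.erase i).powerset,
    (S.card.factorial * (market.card - S.card - 1).factorial : ℝ)
      / (market.card.factorial : ℝ) * (v (insert i S) - v S)

noncomputable def shapleyWeight (m s : ℕ) : ℝ :=
  (s.factorial * (m - s - 1).factorial : ℝ) / (m.factorial : ℝ)

lemma shapleyWeight_nonneg (m s : ℕ) : 0 ≤ shapleyWeight m s := by
  unfold shapleyWeight
  positivity

lemma shapleyWeight_succ_add_shapleyWeight_succ {m s : ℕ} (hs : s + 1 ≤ m) :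
    shapleyWeight (m + 1) s + shapleyWeight (m + 1) (s + 1) = shapleyWeight m s := by
  obtain ⟨r, rfl⟩ : ∃ r, m = s + r + 1 := ⟨m - s - 1, by omega⟩
  simp only [shapleyWeight, show s + r + 1 + 1 - s - 1 = r + 1 by omega,
    show s + r + 1 + 1 - (s + 1) - 1 = r by omega, show s + r + 1 - s - 1 = r by omega,
    Nat.factorial_succ]
  field_simp
  push_cast
  ring

lemma sum_powerset_shapleyWeight {α : Type*} (t : Finset α) :
    ∑ S ∈ t.powerset, shapleyWeight (t.card + 1) S.card = 1 := by
  rw [sum_powerset_apply_card (shapleyWeight (t.card + 1))]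
  have hlayer : ∀ s ∈ range (t.card + 1),
      (t.card.choose s) • shapleyWeight (t.card + 1) s = 1 / (t.card + 1) := by
    intro s hs
    have hst : s ≤ t.card := Nat.lt_succ_iff.mp (mem_range.mp hs)
    have hchoose := Nat.choose_mul_factorial_mul_factorial hst
    rw [nsmul_eq_mul, shapleyWeight, show t.card + 1 - s - 1 = t.card - s by omega,
      Nat.factorial_succ]
    field_simp
    norm_cast
    rw [hchoose]
    ring
  rw [sum_congr rfl hlayer, sum_const, card_range, nsmul_eq_mul]
  push_cast
  field_simp

section

variable {ι : Type*} [DecidableEq ι]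

noncomputable def shapleySum (market : Finset ι) (v : Finset ι → ℝ) (i : ι) : ℝ :=
  ∑ S ∈ (market.erase i).powerset,
    shapleyWeight market.card S.card * (v (insert i S) - v S)

lemma shapley_eq_shapleySum_div (market : Finset ι) (v : Finset ι → ℝ) (i : ι) :
    shapley market v i = shapleySum market v i / v market :=
  one_div_mul_eq_div _ _

lemma shapleySum_nonneg {market : Finset ι} {v : Finset ι → ℝ} {i : ι}
    (h : ∀ S ⊆ market.erase i, 0 ≤ v (insert i S) - v S) : 0 ≤ shapleySum market v i :=
  sum_nonneg fun S hS => mul_nonneg (shapleyWeight_nonneg _ _) (h S (mem_powerset.mp hS))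

lemma shapleySum_le {market : Finset ι} {v : Finset ι → ℝ} {i : ι} {b : ℝ} (hi : i ∈ market)
    (h : ∀ S ⊆ market.erase i, v (insert i S) - v S ≤ b) : shapleySum market v i ≤ b := by
  have hcard : market.card = (market.erase i).card + 1 := (card_erase_add_one hi).symm
  calc shapleySum market v i
      ≤ ∑ S ∈ (market.erase i).powerset, shapleyWeight market.card S.card * b :=
        sum_le_sum fun S hS =>
          mul_le_mul_of_nonneg_left (h S (mem_powerset.mp hS)) (shapleyWeight_nonneg _ _)
    _ = b := by rw [← sum_mul, hcard, sum_powerset_shapleyWeight, one_mul]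

-- The weights of `S` and `insert j S` in the larger market add up to the weight of `S` in
-- the smaller one.
lemma shapleySum_insert {market : Finset ι} {v : Finset ι → ℝ} {i j : ι}
    (hi : i ∈ market) (hj : j ∉ market)
    (hmarg : ∀ S ⊆ market.erase i,
      v (insert i (insert j S)) - v (insert j S) = v (insert i S) - v S) :
    shapleySum (insert j market) v i = shapleySum market v i := by
  have hji : j ≠ i := fun h => hj (h ▸ hi)
  have hj' : j ∉ market.erase i := fun h => hj (mem_of_mem_erase h)
  rw [shapleySum, erase_insert_of_ne hji, sum_powerset_insert hj', card_insert_of_notMem hj,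
    ← sum_add_distrib, shapleySum]
  refine sum_congr rfl fun S hS => ?_
  have hS := mem_powerset.mp hS
  have hsm : S.card + 1 ≤ market.card := by
    have := card_le_card hS
    have := card_erase_add_one hi
    omega
  rw [card_insert_of_notMem fun h => hj' (hS h), hmarg S hS,
    ← shapleyWeight_succ_add_shapleyWeight_succ hsm]
  ring

def SetMonotoneOn (U : Finset ι) (f : Finset ι → ℝ) : Prop :=
  ∀ R Q : Finset ι, R ⊆ Q → Q ⊆ U → f R ≤ f Q

def SetSupermodularOn (U : Finset ι) (f : Finset ι → ℝ) : Prop :=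
  ∀ R Q : Finset ι, R ⊆ Q → Q ⊆ U → ∀ x ∈ U \ Q,
    f (insert x R) - f R ≤ f (insert x Q) - f Q

def IsReplicaPairOn (U : Finset ι) (f : Finset ι → ℝ) (i i' : ι) : Prop :=
  ∀ S ⊆ U, f (S ∪ {i}) = f (S ∪ {i'}) ∧ f (S ∪ {i'}) = f (S ∪ {i, i'})

namespace IsReplicaPairOn

variable {U : Finset ι} {f : Finset ι → ℝ} {i i' : ι}

-- For `i, i' ∉ S`, supermodularity bounds the gain of `i'` at `S` by its gain at `S ∪ {i}`,
-- which the replica property makes zero.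
lemma insert_right_eq (hrep : IsReplicaPairOn U f i i') (hmono : SetMonotoneOn U f)
    (hsuper : SetSupermodularOn U f) (hi : i ∈ U) (hi' : i' ∈ U) (hne : i ≠ i')
    {S : Finset ι} (hS : S ⊆ U) : f (insert i' S) = f S := by
  obtain ⟨hii', hi'ii'⟩ := hrep S hS
  rw [union_singleton, union_singleton] at hii'
  rw [union_singleton, union_insert, union_singleton] at hi'ii'
  by_cases hi'S : i' ∈ S
  · rw [insert_eq_of_mem hi'S]
  by_cases hiS : i ∈ S
  · rw [← hii', insert_eq_of_mem hiS]
  have hgain := hsuper S (insert i S) (subset_insert i S) (insert_subset hi hS) i'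
    (mem_sdiff.mpr ⟨hi', by simp [hi'S, Ne.symm hne]⟩)
  rw [insert_comm, ← hi'ii', hii', sub_self] at hgain
  exact le_antisymm (sub_nonpos.mp hgain) (hmono S (insert i' S) (subset_insert i' S)
    (insert_subset hi' hS))

lemma insert_left_eq (hrep : IsReplicaPairOn U f i i') (hmono : SetMonotoneOn U f)
    (hsuper : SetSupermodularOn U f) (hi : i ∈ U) (hi' : i' ∈ U) (hne : i ≠ i')
    {S : Finset ι} (hS : S ⊆ U) : f (insert i S) = f S := by
  have hii' := (hrep S hS).1
  rw [union_singleton, union_singleton] at hii'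
  rw [hii', hrep.insert_right_eq hmono hsuper hi hi' hne hS]

end IsReplicaPairOn

lemma multiTaskValue_insert_sub {U D S : Finset ι} {g : ι → Finset ι → ℝ} {x : ι}
    (hDU : D ⊆ U) (hSU : S ⊆ U) (hxU : x ∈ U) (hxS : x ∉ S)
    (hnull : ∀ j ∈ U, ∀ T ⊆ U, g j (insert x T) = g j T) :
    multiTaskValue D g (insert x S) - multiTaskValue D g S = g x S - g x ∅ := by
  have hD : ∀ j ∈ D, g j (insert x S) = g j S := fun j hj => hnull j (hDU hj) S hSU
  have hS : ∀ k ∈ S, g k (insert x S) - g k {k} = g k S - g k {k} := fun k hk => by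
    rw [hnull k (hSU hk) S hSU]
  have hx0 : g x {x} = g x ∅ := by simpa using hnull x hxU ∅ (empty_subset U)
  rw [multiTaskValue, multiTaskValue, sum_insert hxS, sum_congr rfl hD, sum_congr rfl hS,
    hnull x hxU S hSU, hx0]
  ring

lemma shapleySum_multiTaskValue_mem_Icc {U D N : Finset ι} {g : ι → Finset ι → ℝ} {i : ι}
    (hDU : D ⊆ U) (hNU : N ⊆ U) (hi : i ∈ N) (hmono : SetMonotoneOn U (g i))
    (hnull : ∀ j ∈ U, ∀ T ⊆ U, g j (insert i T) = g j T) :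
    shapleySum N (multiTaskValue D g) i ∈ Set.Icc 0 (g i N - g i ∅) := by
  have hmarg : ∀ S ⊆ N.erase i,
      multiTaskValue D g (insert i S) - multiTaskValue D g S = g i S - g i ∅ := fun S hS =>
    multiTaskValue_insert_sub hDU (hS.trans ((erase_subset i N).trans hNU)) (hNU hi)
      (fun h => notMem_erase i N (hS h)) hnull
  refine ⟨shapleySum_nonneg fun S hS => ?_, shapleySum_le hi fun S hS => ?_⟩
  · rw [hmarg S hS, sub_nonneg]
    exact hmono ∅ S (empty_subset S) ((hS.trans (erase_subset i N)).trans hNU)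
  · rw [hmarg S hS]
    exact sub_le_sub_right (hmono S N (hS.trans (erase_subset i N)) hNU) _

lemma shapleySum_multiTaskValue_insert {D N : Finset ι} {g : ι → Finset ι → ℝ} {i i' : ι}
    (hD : D ⊆ insert i' N) (hi : i ∈ N) (hi' : i' ∉ N)
    (hnull : ∀ j ∈ insert i' N, ∀ T ⊆ insert i' N,
      g j (insert i T) = g j T ∧ g j (insert i' T) = g j T) :
    shapleySum (insert i' N) (multiTaskValue D g) i = shapleySum N (multiTaskValue D g) i := by
  have hiU : i ∈ insert i' N := mem_insert_of_mem hi
  have hmarg : ∀ S ⊆ insert i' N, i ∉ S →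
      multiTaskValue D g (insert i S) - multiTaskValue D g S = g i S - g i ∅ :=
    fun S hS hiS => multiTaskValue_insert_sub hD hS hiU hiS fun j hj T hT => (hnull j hj T hT).1
  refine shapleySum_insert hi hi' fun S hS => ?_
  have hSU : S ⊆ insert i' N := hS.trans ((erase_subset i N).trans (subset_insert i' N))
  have hiS : i ∉ S := fun h => notMem_erase i N (hS h)
  have hne : i ≠ i' := fun h => hi' (h ▸ hi)
  rw [hmarg _ (insert_subset (mem_insert_self i' N) hSU) (by simp [hne, hiS]), hmarg S hSU hiS,
    (hnull i hiU S hSU).2]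

lemma sum_gain_le_multiTaskValue {D S : Finset ι} {g : ι → Finset ι → ℝ}
    (hD : ∀ j ∈ D, 0 ≤ g j S) : ∑ k ∈ S, (g k S - g k {k}) ≤ multiTaskValue D g S :=
  le_add_of_nonneg_left (sum_nonneg hD)

lemma replica_payoff_inequality {T x A w : ℝ} (hT : 0 ≤ T) (hTx : T ≤ x) (hxA : x ≤ A)
    (hAw : A ≤ w) (hw : 0 < w) :
    2 * (T / (w + x)) * (A + x) ≤ T / w * A + x := by
  have hx : 0 ≤ x := hT.trans hTx
  rw [← sub_nonneg]
  have hnum : 0 ≤ (x - T) * (A * w + 2 * x * w - A * x) + x * (w - A) * (w - x) := by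
    have : 0 ≤ A * w + 2 * x * w - A * x := by nlinarith
    have : 0 ≤ x * (w - A) * (w - x) := mul_nonneg (mul_nonneg hx (by linarith)) (by linarith)
    nlinarith
  have hwx : 0 < w + x := by linarith
  have hdiff : T / w * A + x - 2 * (T / (w + x)) * (A + x)
      = ((x - T) * (A * w + 2 * x * w - A * x) + x * (w - A) * (w - x)) / (w * (w + x)) := by
    field_simp
    ring
  rw [hdiff]
  exact div_nonneg hnum (mul_pos hw hwx).le

end

theorem multiTask_robust_to_replication_general {ι : Type*} [DecidableEq ι] (N : Finset ι)
    (i : ι) (hi : i ∈ N) (i' : ι) (hi' : i' ∉ N)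
    (NR : Finset ι) (hNR : NR = insert i' N)
    (D : Finset ι) (hD : D ⊆ N)
    (g : ι → Finset ι → ℝ)
    (hg_nonneg : ∀ k ∈ NR, ∀ S ⊆ NR, 0 ≤ g k S)
    (hg_mono : ∀ k ∈ NR, ∀ R Q : Finset ι, R ⊆ Q → Q ⊆ NR → g k R ≤ g k Q)
    (hg_super : ∀ k ∈ NR, ∀ R Q : Finset ι, R ⊆ Q → Q ⊆ NR → ∀ x ∈ NR \ Q,
      g k (insert x R) - g k R ≤ g k (insert x Q) - g k Q)
    (hgi' : g i' = g i)
    (hrep : ∀ j ∈ NR, ∀ S ⊆ NR,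
      g j (S ∪ {i}) = g j (S ∪ {i'}) ∧ g j (S ∪ {i'}) = g j (S ∪ {i, i'}))
    (a : ι → ℝ) (ha : ∀ j ∈ N, a j = g j N - g j {j})
    (A : ℝ) (hA : A = ∑ j ∈ N, a j)
    (hwN : 0 < multiTaskValue D g N) :
    2 * shapley NR (multiTaskValue D g) i * (A + a i)
      ≤ shapley N (multiTaskValue D g) i * A + a i := by
  subst hNR
  have hNNR : N ⊆ insert i' N := subset_insert i' N
  have hiNR : i ∈ insert i' N := hNNR hi
  have hi'NR : i' ∈ insert i' N := mem_insert_self i' N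
  have hne : i ≠ i' := fun h => hi' (h ▸ hi)
  have hnull : ∀ j ∈ insert i' N, ∀ T ⊆ insert i' N,
      g j (insert i T) = g j T ∧ g j (insert i' T) = g j T := fun j hj T hT =>
    ⟨IsReplicaPairOn.insert_left_eq (hrep j hj) (hg_mono j hj) (hg_super j hj) hiNR hi'NR hne hT,
      IsReplicaPairOn.insert_right_eq (hrep j hj) (hg_mono j hj) (hg_super j hj) hiNR hi'NR hne hT⟩
  have hai : a i = g i N - g i ∅ := by
    rw [ha i hi, ← insert_empty, (hnull i hiNR ∅ (empty_subset _)).1]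
  have hwNR : multiTaskValue D g (insert i' N) = multiTaskValue D g N + a i := by
    rw [hai, ← hgi', ← multiTaskValue_insert_sub (hD.trans hNNR) hNNR hi'NR hi'
      fun j hj T hT => (hnull j hj T hT).2, add_sub_cancel]
  obtain ⟨hT0, hTa⟩ := shapleySum_multiTaskValue_mem_Icc (hD.trans hNNR) hNNR hi
    (hg_mono i hiNR) fun j hj T hT => (hnull j hj T hT).1
  have haA : a i ≤ A := hA ▸ single_le_sum (fun j hj => by
    rw [ha j hj, sub_nonneg]
    exact hg_mono j (hNNR hj) {j} N (singleton_subset_iff.mpr hj) hNNR) hi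
  have hAw : A ≤ multiTaskValue D g N := by
    rw [hA, sum_congr rfl ha]
    exact sum_gain_le_multiTaskValue fun j hj => hg_nonneg j (hNNR (hD hj)) N hNNR
  rw [shapley_eq_shapleySum_div, shapley_eq_shapleySum_div,
    shapleySum_multiTaskValue_insert (hD.trans hNNR) hi hi' hnull, hwNR]
  exact replica_payoff_inequality hT0 (hai ▸ hTa) haA hAw hwN

/-- multi-task market is robust to replication: for nonnegative,
monotone and supermodular gain functions `g_k` with `g_{i'} = g_i` satisfying the
replica property with respect to `{i, i'}` and `w(N) > 0`, the payoff of party `i`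
after replicating itself once does not exceed its payoff in the original market:
`2·φ^R(i)·(A + a_i) ≤ φ(i)·A + a_i`. -/
theorem multiTask_robust_to_replication {ι : Type*} [DecidableEq ι] (N : Finset ι)
    (M : ℕ) (hcard : N.card = M) (hM : 1 ≤ M)
    (i : ι) (hi : i ∈ N) (i' : ι) (hi' : i' ∉ N)
    (NR : Finset ι) (hNR : NR = insert i' N)
    (D : Finset ι) (hD : D ⊆ N)
    (g : ι → Finset ι → ℝ)
    (hg_nonneg : ∀ k ∈ NR, ∀ S ⊆ NR, 0 ≤ g k S)
    (hg_mono : ∀ k ∈ NR, ∀ R Q : Finset ι, R ⊆ Q → Q ⊆ NR → g k R ≤ g k Q)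
    (hg_super : ∀ k ∈ NR, ∀ R Q : Finset ι, R ⊆ Q → Q ⊆ NR → ∀ x ∈ NR \ Q,
      g k (insert x R) - g k R ≤ g k (insert x Q) - g k Q)
    (hgi' : g i' = g i)
    (hrep : ∀ j ∈ NR, ∀ S ⊆ NR,
      g j (S ∪ {i}) = g j (S ∪ {i'}) ∧ g j (S ∪ {i'}) = g j (S ∪ {i, i'}))
    (a : ι → ℝ) (ha : ∀ j ∈ N, a j = g j N - g j {j})
    (A : ℝ) (hA : A = ∑ j ∈ N, a j)
    (hwN : 0 < multiTaskValue D g N) :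
    2 * shapley NR (multiTaskValue D g) i * (A + a i)
      ≤ shapley N (multiTaskValue D g) i * A + a i :=
  multiTask_robust_to_replication_general N i hi i' hi' NR hNR D hD g hg_nonneg hg_mono hg_super
    hgi' hrep a ha A hA hwN
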